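/- If U is a hyperplane generic to an arrangement A in C^ℓ, then χ(A ∩ U, t) = (χ(A, t) − χ(A, 0)) / t. -/

import Mathlib

open Polynomial
open scoped Classical
noncomputable section

/-- The ambient vector space `ℂ^ℓ`. -/
abbrev Vsp (ℓ : ℕ) : Type := Fin ℓ → ℂ

namespace Arrangement

variable {ℓ : ℕ}

/-- The (affine) dimension of an affine subspace of `ℂ^ℓ`. -/
def adim (X : AffineSubspace ℂ (Vsp ℓ)) : ℕ := Module.finrank ℂ X.direction

/-- `H` is an affine hyperplane of the ambient affine subspace `W`. -/
def IsHyperplaneIn (W H : AffineSubspace ℂ (Vsp ℓ)) : Prop :=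
  H ≤ W ∧ H ≠ ⊥ ∧ adim H + 1 = adim W

/-- The intersection poset `L(𝒜)` of the arrangement `𝒜` inside the ambient
affine subspace `W`: all nonempty intersections of subfamilies of `𝒜`
(the empty intersection giving the ambient space `W` itself). -/
def interPoset (W : AffineSubspace ℂ (Vsp ℓ)) (𝒜 : Finset (AffineSubspace ℂ (Vsp ℓ))) :
    Finset (AffineSubspace ℂ (Vsp ℓ)) :=
  (𝒜.powerset.image (fun I : Finset (AffineSubspace ℂ (Vsp ℓ)) => W ⊓ I.inf id)).filter (fun X => X ≠ ⊥)

/-- The Möbius function of the intersection poset, computed with recursion fuel: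
`μ(W) = 1` and `μ(X) = - ∑_{Y > X} μ(Y)` (reverse-inclusion order, so `Y > X`
means `X < Y` as subspaces).  Fuel `n ≥ codim X` gives the correct value. -/
def mobiusFuel (W : AffineSubspace ℂ (Vsp ℓ)) (𝒜 : Finset (AffineSubspace ℂ (Vsp ℓ))) :
    ℕ → AffineSubspace ℂ (Vsp ℓ) → ℤ
  | 0, _ => 1
  | n + 1, X =>
      if X = W then 1
      else - ∑ Y ∈ (interPoset W 𝒜).filter (fun Y => X < Y), mobiusFuel W 𝒜 n Y

/-- The Möbius function `μ` of `L(𝒜)` (fuel `ℓ` suffices). -/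
def mobius (W : AffineSubspace ℂ (Vsp ℓ)) (𝒜 : Finset (AffineSubspace ℂ (Vsp ℓ)))
    (X : AffineSubspace ℂ (Vsp ℓ)) : ℤ :=
  mobiusFuel W 𝒜 ℓ X

/-- The characteristic polynomial `χ(𝒜, t) = ∑_{X ∈ L(𝒜)} μ(X) t^{dim X}`. -/
def charPoly (W : AffineSubspace ℂ (Vsp ℓ)) (𝒜 : Finset (AffineSubspace ℂ (Vsp ℓ))) :
    Polynomial ℤ :=
  ∑ X ∈ interPoset W 𝒜, C (mobius W 𝒜 X) * (Polynomial.X : Polynomial ℤ) ^ (adim X)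

/-- `𝒜` is essential (in the ambient subspace `W`): it contains `dim W` hyperplanes
whose defining linear forms are linearly independent, equivalently whose directions
intersect `W`'s direction trivially. -/
def EssentialIn (W : AffineSubspace ℂ (Vsp ℓ)) (𝒜 : Finset (AffineSubspace ℂ (Vsp ℓ))) : Prop :=
  ∃ s ⊆ 𝒜, s.card = adim W ∧ (s.inf fun H => H.direction) ⊓ W.direction = ⊥

/-- The restriction `𝒜 ∩ W = {H ∩ W : H ∈ 𝒜, H ∩ W ≠ ∅}` of the arrangement `𝒜`
to the affine subspace `W`. -/
def restrictTo (W : AffineSubspace ℂ (Vsp ℓ)) (𝒜 : Finset (AffineSubspace ℂ (Vsp ℓ))) :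
    Finset (AffineSubspace ℂ (Vsp ℓ)) :=
  (𝒜.image fun H => H ⊓ W).filter fun X => X ≠ ⊥

/-- `U` is a hyperplane generic (transversal) to the arrangement `𝒜`: no element of
the intersection poset is contained in `U`, and for each `X ∈ L(𝒜)` of positive
dimension, `X ∩ U` is nonempty of dimension `dim X - 1`. -/
def GenericTo (U : AffineSubspace ℂ (Vsp ℓ)) (𝒜 : Finset (AffineSubspace ℂ (Vsp ℓ))) : Prop :=
  IsHyperplaneIn ⊤ U ∧
    ∀ X ∈ interPoset ⊤ 𝒜, ¬X ≤ U ∧ (1 ≤ adim X → X ⊓ U ≠ ⊥ ∧ adim (X ⊓ U) + 1 = adim X)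

/-- The Boolean arrangement in `ℂ^ℓ`, defined by `x₁ ⋯ x_ℓ = 0`:
the `ℓ` coordinate hyperplanes `{x i = 0}`. -/
def booleanArrangement (ℓ : ℕ) : Finset (AffineSubspace ℂ (Vsp ℓ)) :=
  Finset.univ.image fun i : Fin ℓ =>
    (LinearMap.ker (LinearMap.proj i : Vsp ℓ →ₗ[ℂ] ℂ)).toAffineSubspace

end Arrangement

/-! Since `U` is generic, `X ↦ X ∩ U` maps the positive-dimensional elements of `L(𝒜)` onto
`L(𝒜 ∩ U) = {U ∩ X : X ∈ L(𝒜)} \ {∅}` (a zero-dimensional `X` meeting `U` would lie in `U`),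
lowers dimension by one and is an order embedding: if `X ∩ U ≤ Y` then `X ∩ Y ∈ L(𝒜)` sits
between the codimension-one `X ∩ U` and `X`, and it cannot be `X ∩ U`, which lies in `U`.
Only `ℂ^ℓ` is sent to `U`, so the recursion defining `μ` is transported and `μ(X ∩ U) = μ(X)`.
Hence `t · χ(𝒜 ∩ U, t)` collects exactly the terms of `χ(𝒜, t)` with `dim X ≥ 1`, which is
`χ(𝒜, t) - χ(𝒜, 0)`. -/

theorem Finset.inf_inf_inf_self {α ι : Type*} [SemilatticeInf α] [OrderTop α]
    (a : α) (s : Finset ι) (f : ι → α) :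
    a ⊓ s.inf (fun i => f i ⊓ a) = a ⊓ s.inf f := by
  change a ⊓ s.inf (f ⊓ fun _ => a) = _
  rw [Finset.inf_inf, inf_left_comm, inf_comm,
    inf_eq_left.mpr (Finset.le_inf_const : a ≤ s.inf fun _ => a)]

theorem Polynomial.sum_C_mul_X_pow_sub_C_eval_zero {R ι : Type*} [Ring R]
    (s : Finset ι) (a : ι → R) (d : ι → ℕ) :
    (∑ i ∈ s, C (a i) * X ^ d i) - C ((∑ i ∈ s, C (a i) * X ^ d i).eval 0) =
      ∑ i ∈ s with 1 ≤ d i, C (a i) * X ^ d i := by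
  rw [eval_finsetSum, map_sum, ← Finset.sum_sub_distrib, Finset.sum_filter]
  refine Finset.sum_congr rfl fun i _ => ?_
  by_cases h : 1 ≤ d i
  · simp [h, zero_pow (Nat.one_le_iff_ne_zero.mp h)]
  · simp [Nat.lt_one_iff.mp (not_le.mp h)]

namespace Arrangement

variable {ℓ : ℕ} {X Y U W : AffineSubspace ℂ (Vsp ℓ)} {𝒜 : Finset (AffineSubspace ℂ (Vsp ℓ))}

theorem adim_lt_adim_of_lt (hX : X ≠ ⊥) (h : X < Y) : adim X < adim Y :=
  Submodule.finrank_lt_finrank_of_lt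
    (AffineSubspace.direction_lt_of_nonempty h ((AffineSubspace.nonempty_iff_ne_bot X).mpr hX))

theorem one_le_adim_of_lt (hX : X ≠ ⊥) (h : X < Y) : 1 ≤ adim Y :=
  (Nat.zero_le _).trans_lt (adim_lt_adim_of_lt hX h)

theorem eq_of_le_of_adim_le (hX : X ≠ ⊥) (h : X ≤ Y) (hd : adim Y ≤ adim X) : X = Y :=
  h.eq_of_not_lt fun hlt => (adim_lt_adim_of_lt hX hlt).not_ge hd

theorem mem_interPoset :
    X ∈ interPoset W 𝒜 ↔ (∃ I ⊆ 𝒜, W ⊓ I.inf id = X) ∧ X ≠ ⊥ := by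
  simp only [interPoset, Finset.mem_filter, Finset.mem_image, Finset.mem_powerset]

theorem ne_bot_of_mem_interPoset (h : X ∈ interPoset W 𝒜) : X ≠ ⊥ :=
  (mem_interPoset.mp h).2

theorem inf_mem_interPoset (hX : X ∈ interPoset W 𝒜) (hY : Y ∈ interPoset W 𝒜) (h : X ⊓ Y ≠ ⊥) :
    X ⊓ Y ∈ interPoset W 𝒜 := by
  obtain ⟨⟨I, hI, rfl⟩, -⟩ := mem_interPoset.mp hX
  obtain ⟨⟨J, hJ, rfl⟩, -⟩ := mem_interPoset.mp hY
  refine mem_interPoset.mpr ⟨⟨I ∪ J, Finset.union_subset hI hJ, ?_⟩, h⟩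
  rw [Finset.inf_union, inf_inf_distrib_left]

theorem interPoset_restrictTo : interPoset W (restrictTo W 𝒜) = interPoset W 𝒜 := by
  ext Y
  simp only [mem_interPoset, and_congr_left_iff]
  intro hY
  constructor
  · rintro ⟨I, hI, rfl⟩
    obtain ⟨J, hJ, rfl⟩ := Finset.subset_image_iff.mp (hI.trans (Finset.filter_subset _ _))
    exact ⟨J, hJ, by rw [Finset.inf_image]; exact (Finset.inf_inf_inf_self W J id).symm⟩
  · rintro ⟨I, hI, rfl⟩
    refine ⟨I.image (· ⊓ W), fun K hK => ?_, by
      rw [Finset.inf_image]; exact Finset.inf_inf_inf_self W I id⟩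
    obtain ⟨H, hH, rfl⟩ := Finset.mem_image.mp hK
    refine Finset.mem_filter.mpr ⟨Finset.mem_image_of_mem _ (hI hH), fun hb => hY ?_⟩
    rw [eq_bot_iff, ← hb, inf_comm]
    exact inf_le_inf_right W (Finset.inf_le hH)

theorem mobiusFuel_restrictTo : mobiusFuel W (restrictTo W 𝒜) = mobiusFuel W 𝒜 := by
  funext n
  induction n with
  | zero => rfl
  | succ n ih => funext X; simp only [mobiusFuel, interPoset_restrictTo, ih]

theorem charPoly_restrictTo : charPoly W (restrictTo W 𝒜) = charPoly W 𝒜 := by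
  simp only [charPoly, mobius, interPoset_restrictTo, mobiusFuel_restrictTo]

theorem interPoset_eq_filter_image :
    interPoset W 𝒜 = ((interPoset ⊤ 𝒜).image (· ⊓ W)).filter (· ≠ ⊥) := by
  ext Y
  simp only [Finset.mem_filter, Finset.mem_image, mem_interPoset, and_congr_left_iff]
  intro hY
  constructor
  · rintro ⟨I, hI, rfl⟩
    refine ⟨⊤ ⊓ I.inf id, ⟨⟨I, hI, rfl⟩, fun hb => hY ?_⟩, by rw [top_inf_eq, inf_comm]⟩
    rw [eq_bot_iff, ← hb, top_inf_eq]
    exact inf_le_right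
  · rintro ⟨-, ⟨⟨I, hI, rfl⟩, -⟩, rfl⟩
    exact ⟨I, hI, by rw [top_inf_eq, inf_comm]⟩

namespace GenericTo

variable (hU : GenericTo U 𝒜)
include hU

theorem eq_top_of_le (hX : X ∈ interPoset ⊤ 𝒜) (h : U ≤ X) : X = ⊤ := by
  by_contra hX_ne_top
  have hlt : adim X < adim U + 1 := by
    rw [hU.1.2.2]
    exact adim_lt_adim_of_lt (ne_bot_of_mem_interPoset hX) (lt_top_iff_ne_top.mpr hX_ne_top)
  have hUX : U = X := eq_of_le_of_adim_le hU.1.2.1 h (by omega)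
  exact (hU.2 X hX).1 hUX.ge

theorem inf_ne_bot_iff (hX : X ∈ interPoset ⊤ 𝒜) : X ⊓ U ≠ ⊥ ↔ 1 ≤ adim X := by
  refine ⟨fun h => Nat.one_le_iff_ne_zero.mpr fun h0 => (hU.2 X hX).1 ?_,
    fun h => ((hU.2 X hX).2 h).1⟩
  have hXU : X ⊓ U = X := eq_of_le_of_adim_le h inf_le_left (by omega)
  exact hXU ▸ inf_le_right

theorem interPoset_eq_image :
    interPoset U 𝒜 = ((interPoset ⊤ 𝒜).filter (1 ≤ adim ·)).image (· ⊓ U) := by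
  rw [interPoset_eq_filter_image, Finset.filter_image]
  congr 1
  exact Finset.filter_congr fun X hX => hU.inf_ne_bot_iff hX

theorem le_of_inf_le (hX : X ∈ interPoset ⊤ 𝒜) (hY : Y ∈ interPoset ⊤ 𝒜) (h1 : 1 ≤ adim X)
    (h : X ⊓ U ≤ Y) : X ≤ Y := by
  obtain ⟨hXU, hdim⟩ := (hU.2 X hX).2 h1
  have hXU_le : X ⊓ U ≤ X ⊓ Y := le_inf inf_le_left h
  have hXY : X ⊓ Y ∈ interPoset ⊤ 𝒜 :=
    inf_mem_interPoset hX hY fun hb => hXU (le_bot_iff.mp (hb ▸ hXU_le))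
  refine inf_eq_left.mp (eq_of_le_of_adim_le (ne_bot_of_mem_interPoset hXY) inf_le_left ?_)
  by_contra! hlt
  -- a proper `X ⊓ Y` would contain the codimension-one `X ⊓ U`, hence equal it and lie in `U`
  have h_eq : X ⊓ U = X ⊓ Y := eq_of_le_of_adim_le hXU hXU_le (by omega)
  exact (hU.2 _ hXY).1 (h_eq ▸ inf_le_right)

theorem inf_le_inf_iff (hX : X ∈ interPoset ⊤ 𝒜) (hY : Y ∈ interPoset ⊤ 𝒜) (h1 : 1 ≤ adim X) :
    X ⊓ U ≤ Y ⊓ U ↔ X ≤ Y :=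
  ⟨fun h => hU.le_of_inf_le hX hY h1 (h.trans inf_le_left), fun h => inf_le_inf_right U h⟩

theorem inf_lt_inf_iff (hX : X ∈ interPoset ⊤ 𝒜) (hY : Y ∈ interPoset ⊤ 𝒜) (h1X : 1 ≤ adim X)
    (h1Y : 1 ≤ adim Y) : X ⊓ U < Y ⊓ U ↔ X < Y := by
  simp only [lt_iff_le_not_ge, hU.inf_le_inf_iff hX hY h1X, hU.inf_le_inf_iff hY hX h1Y]

theorem injOn_inf : Set.InjOn (· ⊓ U) ((interPoset ⊤ 𝒜).filter (1 ≤ adim ·) : Set _) := by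
  intro X hX Y hY h
  simp only [Finset.coe_filter, Set.mem_ofPred_eq] at hX hY
  exact le_antisymm ((hU.inf_le_inf_iff hX.1 hY.1 hX.2).mp h.le)
    ((hU.inf_le_inf_iff hY.1 hX.1 hY.2).mp h.ge)

theorem filter_inf_lt_eq_image (hX : X ∈ interPoset ⊤ 𝒜) (h1 : 1 ≤ adim X) :
    (interPoset U 𝒜).filter (X ⊓ U < ·) = ((interPoset ⊤ 𝒜).filter (X < ·)).image (· ⊓ U) := by
  rw [hU.interPoset_eq_image, Finset.filter_image, Finset.filter_filter]
  congr 1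
  refine Finset.filter_congr fun Y hY =>
    ⟨fun h => (hU.inf_lt_inf_iff hX hY h1 h.1).mp h.2, fun h => ?_⟩
  have hY1 := one_le_adim_of_lt (ne_bot_of_mem_interPoset hX) h
  exact ⟨hY1, (hU.inf_lt_inf_iff hX hY h1 hY1).mpr h⟩

theorem mobiusFuel_inf (n : ℕ) (hX : X ∈ interPoset ⊤ 𝒜) (h1 : 1 ≤ adim X) :
    mobiusFuel U 𝒜 n (X ⊓ U) = mobiusFuel ⊤ 𝒜 n X := by
  induction n generalizing X with
  | zero => rfl
  | succ n ih =>
    have hX_top : X ⊓ U = U ↔ X = ⊤ :=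
      inf_eq_right.trans ⟨hU.eq_top_of_le hX, fun h => h ▸ le_top⟩
    have hpos : ∀ Y ∈ (interPoset ⊤ 𝒜).filter (X < ·), Y ∈ interPoset ⊤ 𝒜 ∧ 1 ≤ adim Y :=
      fun Y hY => (Finset.mem_filter.mp hY).imp_right
        (one_le_adim_of_lt (ne_bot_of_mem_interPoset hX))
    simp only [mobiusFuel, hX_top, hU.filter_inf_lt_eq_image hX h1]
    rw [Finset.sum_image (hU.injOn_inf.mono fun Y hY => by simpa using hpos Y hY)]
    congr 2
    exact Finset.sum_congr rfl fun Y hY => ih (hpos Y hY).1 (hpos Y hY).2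

end GenericTo

end Arrangement

open Arrangement in
theorem charPoly_restriction_general (ℓ : ℕ) (𝒜 : Finset (AffineSubspace ℂ (Vsp ℓ)))
    (U : AffineSubspace ℂ (Vsp ℓ)) (hU : GenericTo U 𝒜) :
    Polynomial.X * charPoly U (restrictTo U 𝒜) =
      charPoly ⊤ 𝒜 - Polynomial.C ((charPoly ⊤ 𝒜).eval 0) := by
  rw [charPoly_restrictTo, charPoly, charPoly, sum_C_mul_X_pow_sub_C_eval_zero,
    hU.interPoset_eq_image, Finset.sum_image hU.injOn_inf, Finset.mul_sum]
  refine Finset.sum_congr rfl fun X hX => ?_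
  obtain ⟨hXL, h1⟩ := Finset.mem_filter.mp hX
  rw [mobius, mobius, hU.mobiusFuel_inf ℓ hXL h1, ← ((hU.2 X hXL).2 h1).2, pow_succ]
  ring

open Arrangement in
/-- If `U` is a hyperplane generic to the (essential) arrangement `𝒜`
in `ℂ^ℓ`, then `χ(𝒜 ∩ U, t) = (χ(𝒜, t) - χ(𝒜, 0)) / t`, i.e.
`t · χ(𝒜 ∩ U, t) = χ(𝒜, t) - χ(𝒜, 0)`. -/
theorem charPoly_restriction (ℓ : ℕ) (𝒜 : Finset (AffineSubspace ℂ (Vsp ℓ)))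
    (hhyp : ∀ H ∈ 𝒜, IsHyperplaneIn ⊤ H) (hess : EssentialIn ⊤ 𝒜)
    (U : AffineSubspace ℂ (Vsp ℓ)) (hU : GenericTo U 𝒜) :
    Polynomial.X * charPoly U (restrictTo U 𝒜) =
      charPoly ⊤ 𝒜 - Polynomial.C ((charPoly ⊤ 𝒜).eval 0) :=
  charPoly_restriction_general ℓ 𝒜 U hU
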